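/- Consider the RPSDA gradient aggregation: z_i[t] = sum_{r=0}^{t-1} sum_{j=1}^n g_j[r] Psi_{j,i}(r,t) and w_i[t] = sum_{j=1}^n Psi_{j,i}(1,t), where Psi(r,t) are products of row-stochastic matrices with all entries of every (nB+1)-fold product bounded below by beta^{nB+1}, and ||g_j[r]|| <= L for all j, r. Let zbar[t] = (1/n) sum_{r=0}^{t-1} sum_{j=1}^n g_j[r] and gamma = 1 - beta^{nB+1}. Then for t >= nB+1 and each i in {1,...,n}, || zbar[t] - z_i[t]/w_i[t] || <= L / ( beta^{nB+1} (1 - gamma^{1/(nB+1)}) gamma^{nB/(nB+1)} ). -/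

import Mathlib

/-! A row-stochastic matrix whose entries are all at least `c` contracts the spread
`max_j v_j - min_j v_j` of every vector by the factor `1 - c` (Dobrushin). By the block
condition every `nB + 1` consecutive factors form such a matrix with `c = β^(nB+1)`, so the
entries of a column of `Psi(r, t)` agree up to `γ^⌊(t-r)/(nB+1)⌋`, and so do those of
`Psi(1, t)` and `Psi(r, t)`, both being convex combinations of the rows of
`Psi(max r 1, t)`. Since `w_i[t] ≥ n β^(nB+1)`, the weight of `g_j[r]` in `z_i[t]/w_i[t]`
is within `γ^⌊(t-r)/(nB+1)⌋ / (n β^(nB+1))` of `1/n`, and summing the geometric series in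
`r` gives the bound. -/

open Finset Matrix

noncomputable def ergDelta {m : ℕ} (A : Matrix (Fin m) (Fin m) ℝ) : ℝ :=
  ⨆ j, ⨆ i1, ⨆ i2, |A i1 j - A i2 j|

noncomputable def ergLambda {m : ℕ} (A : Matrix (Fin m) (Fin m) ℝ) : ℝ :=
  1 - ⨅ i1, ⨅ i2, ∑ j, min (A i1 j) (A i2 j)

def RowStochastic {m : ℕ} (A : Matrix (Fin m) (Fin m) ℝ) : Prop :=
  (∀ i j, 0 ≤ A i j) ∧ ∀ i, ∑ j, A i j = 1

/-- `Psi M r t = M r * M (r+1) * ... * M t` (the identity matrix when `r > t`). -/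
noncomputable def Psi {m : ℕ} (M : ℕ → Matrix (Fin m) (Fin m) ℝ) (r t : ℕ) :
    Matrix (Fin m) (Fin m) ℝ :=
  ((List.range' r (t + 1 - r)).map M).prod

section Weights
variable {ι : Type*} [Fintype ι]

theorem abs_sum_mul_sub_sum_mul_le {a b v : ι → ℝ} {S : ℝ}
    (ha : ∀ k, 0 ≤ a k) (ha1 : ∑ k, a k = 1) (hb : ∀ k, 0 ≤ b k) (hb1 : ∑ k, b k = 1)
    (hv : ∀ k l, |v k - v l| ≤ S) :
    |∑ k, a k * v k - ∑ l, b l * v l| ≤ S := by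
  have hab : ∀ k l, 0 ≤ a k * b l := fun k l => mul_nonneg (ha k) (hb l)
  have key : ∑ k, a k * v k - ∑ l, b l * v l = ∑ k, ∑ l, a k * b l * (v k - v l) := by
    simp only [mul_sub, sum_sub_distrib]
    rw [sum_comm (f := fun k l => a k * b l * v l)]
    simp only [mul_comm (a _) (b _), mul_assoc, ← mul_sum, ← sum_mul, ha1, hb1]
    simp [mul_comm]
  calc |∑ k, a k * v k - ∑ l, b l * v l|
      ≤ ∑ k, ∑ l, |a k * b l * (v k - v l)| := by
        rw [key]
        exact (abs_sum_le_sum_abs _ _).trans (sum_le_sum fun k _ => abs_sum_le_sum_abs _ _)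
    _ ≤ ∑ k, ∑ l, a k * b l * S := by
        gcongr with k _ l _
        rw [abs_mul, abs_of_nonneg (hab k l)]
        exact mul_le_mul_of_nonneg_left (hv k l) (hab k l)
    _ = S := by simp only [← sum_mul, ← mul_sum, hb1, ha1, mul_one, one_mul]

theorem abs_sum_mul_sub_sum_mul_le_of_le {a b v : ι → ℝ} {c S : ℝ} (hc : 0 ≤ c)
    (ha : ∀ k, c ≤ a k) (ha1 : ∑ k, a k = 1) (hb : ∀ k, c ≤ b k) (hb1 : ∑ k, b k = 1)
    (hv : ∀ k l, |v k - v l| ≤ S) :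
    |∑ k, a k * v k - ∑ k, b k * v k| ≤ (1 - c) * S := by
  have : Nonempty ι := by
    by_contra h
    rw [not_nonempty_iff] at h
    simp at ha1
  obtain ⟨k₀, hk₀⟩ := Finite.exists_min v
  have hS : 0 ≤ S := (abs_nonneg _).trans (hv k₀ k₀)
  have hcard : c ≤ Fintype.card ι * c :=
    le_mul_of_one_le_left hc (by exact_mod_cast Fintype.card_pos)
  -- subtracting the minimum of `v` makes every term nonnegative
  have one_sided : ∀ a b : ι → ℝ, (∀ k, c ≤ a k) → ∑ k, a k = 1 → (∀ k, c ≤ b k) →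
      ∑ k, b k = 1 → ∑ k, a k * v k - ∑ k, b k * v k ≤ (1 - c) * S := by
    intro a b ha ha1 hb hb1
    calc ∑ k, a k * v k - ∑ k, b k * v k = ∑ k, (a k - b k) * (v k - v k₀) := by
          simp only [sub_mul, mul_sub, sum_sub_distrib, ← sum_mul, ha1, hb1]; ring
      _ ≤ ∑ k, (a k - c) * S := by
          refine sum_le_sum fun k _ => ?_
          have hd : v k - v k₀ ≤ S := (le_abs_self _).trans (hv k k₀)
          nlinarith [ha k, hb k, hk₀ k]
      _ ≤ (1 - c) * S := by
          rw [← sum_mul, sum_sub_distrib, ha1, sum_const, card_univ, nsmul_eq_mul]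
          gcongr
  exact abs_sub_le_iff.2 ⟨one_sided a b ha ha1 hb hb1, one_sided b a hb hb1 ha ha1⟩

theorem abs_inv_card_sub_inv_sum_mul_le [Nonempty ι] {a : ι → ℝ} {c P ε : ℝ} (hc : 0 < c)
    (ha : ∀ k, c ≤ a k) (haP : ∀ k, |a k - P| ≤ ε) :
    |(Fintype.card ι : ℝ)⁻¹ - (∑ k, a k)⁻¹ * P| ≤ ε / (Fintype.card ι * c) := by
  set N : ℝ := (Fintype.card ι : ℝ)
  set w := ∑ k, a k
  have hN : 0 < N := Nat.cast_pos.2 Fintype.card_pos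
  have hw : N * c ≤ w := by
    simpa [N, w] using sum_le_sum fun k (_ : k ∈ univ) => ha k
  have hw0 : 0 < w := (mul_pos hN hc).trans_le hw
  have hε : 0 ≤ ε := (abs_nonneg _).trans (haP (Classical.arbitrary ι))
  have hnum : |w - N * P| ≤ N * ε := by
    have : w - N * P = ∑ k, (a k - P) := by simp [w, N, sum_sub_distrib]
    rw [this]
    refine (abs_sum_le_sum_abs _ _).trans ?_
    simpa [N] using sum_le_sum fun k (_ : k ∈ univ) => haP k
  calc |N⁻¹ - w⁻¹ * P| = |(w - N * P) / (N * w)| := by congr 1; field_simp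
    _ = |w - N * P| / (N * w) := by rw [abs_div, abs_of_pos (mul_pos hN hw0)]
    _ ≤ N * ε / (N * w) := by gcongr
    _ = ε / w := by field_simp
    _ ≤ ε / (N * c) := by gcongr

end Weights

theorem sum_range_pow_div_le {γ : ℝ} (hγ0 : 0 < γ) (hγ1 : γ < 1) (p t : ℕ) :
    ∑ r ∈ range t, γ ^ ((t - r) / (p + 1)) ≤
      1 / ((1 - γ ^ ((1 : ℝ) / (p + 1))) * γ ^ ((p : ℝ) / (p + 1))) := by
  set x := γ ^ ((1 : ℝ) / (p + 1))
  have hx0 : 0 < x := by positivity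
  have hx1 : x < 1 := Real.rpow_lt_one hγ0.le hγ1 (by positivity)
  have hxγ : x ^ (p + 1) = γ := by
    simpa [x, one_div] using Real.rpow_inv_natCast_pow hγ0.le p.succ_ne_zero
  have hxp : x ^ p = γ ^ ((p : ℝ) / (p + 1)) := by
    rw [← Real.rpow_natCast, ← Real.rpow_mul hγ0.le]; ring_nf
  rw [← hxp]
  -- `t - 1 - r ≤ p + (p + 1) * ⌊(t - r) / (p + 1)⌋`
  have hterm : ∀ r ∈ range t, γ ^ ((t - r) / (p + 1)) ≤ x ^ (t - 1 - r) / x ^ p := by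
    intro r _
    rw [le_div_iff₀ (by positivity), ← hxγ, ← pow_mul, ← pow_add]
    refine pow_le_pow_of_le_one hx0.le hx1.le ?_
    have := Nat.lt_mul_div_succ (t - r) p.succ_pos
    rw [Nat.mul_succ] at this
    simp only [Nat.succ_eq_add_one] at this
    omega
  calc ∑ r ∈ range t, γ ^ ((t - r) / (p + 1)) ≤ ∑ r ∈ range t, x ^ (t - 1 - r) / x ^ p :=
        sum_le_sum hterm
    _ = (∑ k ∈ range t, x ^ k) / x ^ p := by rw [← sum_div, sum_range_reflect (x ^ ·) t]
    _ ≤ 1 / (1 - x) / x ^ p := by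
        refine div_le_div_of_nonneg_right ?_ (by positivity)
        have := geom_sum_Ico_le_of_lt_one (m := 0) (n := t) hx0.le hx1
        rwa [← range_eq_Ico, pow_zero] at this
    _ = 1 / ((1 - x) * x ^ p) := by rw [div_div]

namespace RowStochastic
variable {m : ℕ} {A W : Matrix (Fin m) (Fin m) ℝ}

theorem one : RowStochastic (1 : Matrix (Fin m) (Fin m) ℝ) :=
  ⟨fun i j => by by_cases h : i = j <;> simp [one_apply, h], fun i => by simp [one_apply]⟩

theorem mul (hA : RowStochastic A) (hW : RowStochastic W) : RowStochastic (A * W) := by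
  refine ⟨fun i j => ?_, fun i => ?_⟩ <;> simp only [mul_apply]
  · exact sum_nonneg fun k _ => mul_nonneg (hA.1 i k) (hW.1 k j)
  rw [sum_comm]
  simp [← mul_sum, hW.2, hA.2]

theorem apply_le_one (hA : RowStochastic A) (i j : Fin m) : A i j ≤ 1 :=
  (hA.2 i).symm ▸ single_le_sum (fun k _ => hA.1 i k) (mem_univ j)

theorem card_mul_le_one (hA : RowStochastic A) {c : ℝ} {i : Fin m} (hc : ∀ j, c ≤ A i j) :
    (m : ℝ) * c ≤ 1 := by
  simpa [hA.2 i] using sum_le_sum fun j (_ : j ∈ univ) => hc j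

theorem apply_eq_one {A : Matrix (Fin 1) (Fin 1) ℝ} (hA : RowStochastic A) (i j : Fin 1) :
    A i j = 1 := by
  simpa [Subsingleton.elim j 0] using hA.2 i

theorem le_mul_apply (hA : RowStochastic A) {P : Matrix (Fin m) (Fin m) ℝ} {c : ℝ} {i : Fin m}
    (hP : ∀ l, c ≤ P l i) (k : Fin m) : c ≤ (A * P) k i := by
  calc c = ∑ l, A k l * c := by rw [← sum_mul, hA.2, one_mul]
    _ ≤ (A * P) k i := by
        rw [mul_apply]
        exact sum_le_sum fun l _ => mul_le_mul_of_nonneg_left (hP l) (hA.1 k l)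

theorem abs_mul_apply_sub_mul_apply_le (hA : RowStochastic A) (hW : RowStochastic W)
    {P : Matrix (Fin m) (Fin m) ℝ} {S : ℝ} {i : Fin m} (hP : ∀ l l', |P l i - P l' i| ≤ S)
    (k j : Fin m) : |(A * P) k i - (W * P) j i| ≤ S := by
  simp only [mul_apply]
  exact abs_sum_mul_sub_sum_mul_le (hA.1 k) (hA.2 k) (hW.1 j) (hW.2 j) hP

theorem abs_mul_apply_sub_mul_apply_le_of_le (hA : RowStochastic A) {c : ℝ} (hc : 0 ≤ c)
    (hAc : ∀ k l, c ≤ A k l) {P : Matrix (Fin m) (Fin m) ℝ} {S : ℝ} {i : Fin m}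
    (hP : ∀ l l', |P l i - P l' i| ≤ S) (k j : Fin m) :
    |(A * P) k i - (A * P) j i| ≤ (1 - c) * S := by
  simp only [mul_apply]
  exact abs_sum_mul_sub_sum_mul_le_of_le hc (hAc k) (hA.2 k) (hAc j) (hA.2 j) hP

end RowStochastic

section Psi
variable {m : ℕ} {M : ℕ → Matrix (Fin m) (Fin m) ℝ}

theorem Psi_eq_mul (M : ℕ → Matrix (Fin m) (Fin m) ℝ) {r s t : ℕ} (hrs : r ≤ s + 1)
    (hst : s ≤ t) : Psi M r t = Psi M r s * Psi M (s + 1) t := by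
  have key := List.range'_append (s := r) (m := s + 1 - r) (n := t - s) (step := 1)
  rw [one_mul, show r + (s + 1 - r) = s + 1 by omega] at key
  rw [Psi, Psi, Psi, show t + 1 - r = s + 1 - r + (t - s) by omega, ← key,
    show t + 1 - (s + 1) = t - s by omega, List.map_append, List.prod_append]

theorem rowStochastic_Psi (hM : ∀ τ, RowStochastic (M τ)) (r t : ℕ) :
    RowStochastic (Psi M r t) := by
  rw [Psi]
  induction List.range' r (t + 1 - r) with
  | nil => exact RowStochastic.one
  | cons a l ih => exact (hM a).mul ih

variable {p : ℕ} {c : ℝ}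

theorem abs_Psi_sub_Psi_le (hc : 0 ≤ c) (hM : ∀ τ, RowStochastic (M τ))
    (hblock : ∀ r i j, c ≤ Psi M r (r + p) i j) (K : ℕ) :
    ∀ r t, r + K * (p + 1) ≤ t + 1 → ∀ i j₁ j₂,
      |Psi M r t j₁ i - Psi M r t j₂ i| ≤ (1 - c) ^ K := by
  induction K with
  | zero =>
    intro r t _ i j₁ j₂
    have hP := rowStochastic_Psi hM r t
    rw [pow_zero, abs_sub_le_iff]
    constructor <;> linarith [hP.1 j₁ i, hP.1 j₂ i, hP.apply_le_one j₁ i, hP.apply_le_one j₂ i]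
  | succ K ih =>
    intro r t hrt i j₁ j₂
    rw [Nat.succ_mul] at hrt
    rw [Psi_eq_mul M (s := r + p) (by omega) (by omega), pow_succ']
    exact (rowStochastic_Psi hM r (r + p)).abs_mul_apply_sub_mul_apply_le_of_le hc (hblock r)
      (ih _ _ (by omega) i) j₁ j₂

theorem le_Psi (hM : ∀ τ, RowStochastic (M τ)) (hblock : ∀ r i j, c ≤ Psi M r (r + p) i j)
    {r t : ℕ} (hrt : r + p ≤ t) (j i : Fin m) : c ≤ Psi M r t j i := by
  obtain rfl | hlt := hrt.eq_or_lt
  · exact hblock r j i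
  · rw [Psi_eq_mul M (s := t - p - 1) (by omega) (by omega)]
    refine (rowStochastic_Psi hM _ _).le_mul_apply (fun l => ?_) j
    simpa [show t - p - 1 + 1 + p = t by omega] using hblock (t - p - 1 + 1) l i

theorem abs_Psi_one_sub_Psi_le (hc : 0 ≤ c) (hM : ∀ τ, RowStochastic (M τ))
    (hblock : ∀ r i j, c ≤ Psi M r (r + p) i j) {r t : ℕ} (hrt : r < t) (k j i : Fin m) :
    |Psi M 1 t k i - Psi M r t j i| ≤ (1 - c) ^ ((t - r) / (p + 1)) := by
  -- both matrices are a row-stochastic matrix times `Psi M (max r 1) t`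
  rw [Psi_eq_mul M (r := 1) (s := r - 1) (by omega) (by omega),
    Psi_eq_mul M (r := r) (s := r - 1) (by omega) (by omega)]
  refine RowStochastic.abs_mul_apply_sub_mul_apply_le (rowStochastic_Psi hM _ _)
    (rowStochastic_Psi hM _ _) (fun l l' => abs_Psi_sub_Psi_le hc hM hblock _ _ _ ?_ i l l') k j
  have := Nat.div_mul_le_self (t - r) (p + 1)
  omega

theorem abs_inv_sub_inv_sum_Psi_mul_le {n : ℕ} (hn : 0 < n) (e : Fin n → Fin m) (hc : 0 < c)
    (hM : ∀ τ, RowStochastic (M τ)) (hblock : ∀ r i j, c ≤ Psi M r (r + p) i j) {r t : ℕ}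
    (ht : p + 1 ≤ t) (hrt : r < t) (i : Fin m) (j : Fin n) :
    |(n : ℝ)⁻¹ - (∑ k, Psi M 1 t (e k) i)⁻¹ * Psi M r t (e j) i| ≤
      (1 - c) ^ ((t - r) / (p + 1)) / (n * c) := by
  have : Nonempty (Fin n) := Fin.pos_iff_nonempty.mp hn
  simpa using abs_inv_card_sub_inv_sum_mul_le hc (fun k => le_Psi hM hblock (by omega) (e k) i)
    (fun k => abs_Psi_one_sub_Psi_le hc.le hM hblock hrt (e k) (e j) i)

end Psi

theorem norm_smul_sum_sub_smul_sum_le {E : Type*} [SeminormedAddCommGroup E] [NormedSpace ℝ E]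
    {κ ι : Type*} [Fintype ι] (s : Finset κ) (a b : ℝ) (P : κ → ι → ℝ) {g : κ → ι → E}
    {L : ℝ} (hg : ∀ r j, ‖g r j‖ ≤ L) :
    ‖a • ∑ r ∈ s, ∑ j, g r j - b • ∑ r ∈ s, ∑ j, P r j • g r j‖ ≤
      L * ∑ r ∈ s, ∑ j, |a - b * P r j| := by
  have : a • ∑ r ∈ s, ∑ j, g r j - b • ∑ r ∈ s, ∑ j, P r j • g r j =
      ∑ r ∈ s, ∑ j, (a - b * P r j) • g r j := by
    simp only [smul_sum, ← sum_sub_distrib, sub_smul, smul_smul]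
  rw [this, mul_sum]
  refine (norm_sum_le _ _).trans (sum_le_sum fun r _ => ?_)
  rw [mul_sum]
  refine (norm_sum_le _ _).trans (sum_le_sum fun j _ => ?_)
  rw [norm_smul, Real.norm_eq_abs, mul_comm L]
  exact mul_le_mul_of_nonneg_left (hg r j) (abs_nonneg _)

theorem rpsda_consensus_error_general {m n B dd : ℕ} (hn : 0 < n) (hnm : n ≤ m)
    (β L : ℝ) (hβ0 : 0 < β) (hL : 0 ≤ L)
    (M : ℕ → Matrix (Fin m) (Fin m) ℝ) (hM : ∀ τ, RowStochastic (M τ))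
    (hblock : ∀ r : ℕ, ∀ i j : Fin m, β ^ (n * B + 1) ≤ Psi M r (r + n * B) i j)
    (g : ℕ → Fin n → EuclideanSpace ℝ (Fin dd))
    (hg : ∀ r j, ‖g r j‖ ≤ L) :
    ∀ t : ℕ, n * B + 1 ≤ t → ∀ i : Fin m,
      ‖(n : ℝ)⁻¹ • (∑ r ∈ Finset.range t, ∑ j : Fin n, g r j)
          - (∑ j : Fin n, Psi M 1 t (Fin.castLE hnm j) i)⁻¹ •
              (∑ r ∈ Finset.range t, ∑ j : Fin n, Psi M r t (Fin.castLE hnm j) i • g r j)‖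
        ≤ L / (β ^ (n * B + 1)
            * (1 - (1 - β ^ (n * B + 1)) ^ ((1 : ℝ) / (n * B + 1)))
            * (1 - β ^ (n * B + 1)) ^ ((n * B : ℝ) / (n * B + 1))) := by
  intro t ht i
  set c := β ^ (n * B + 1)
  have hc : 0 < c := by positivity
  have hm : (1 : ℝ) ≤ m := by exact_mod_cast hn.trans_le hnm
  have hmc : (m : ℝ) * c ≤ 1 := (rowStochastic_Psi hM 0 (0 + n * B)).card_mul_le_one (hblock 0 i)
  obtain hγ | hγ := (show 0 ≤ 1 - c by nlinarith).eq_or_lt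
  · -- `c = 1` forces a single agent, for which `z_i / w_i` is exactly the average
    obtain rfl : m = 1 := by
      have : (m : ℝ) ≤ 1 := by nlinarith
      exact le_antisymm (by exact_mod_cast this) (by exact_mod_cast hm)
    obtain rfl : n = 1 := by omega
    have h1 := fun r t => (rowStochastic_Psi hM r t).apply_eq_one
    rw [← hγ, Real.zero_rpow (by positivity), sub_zero]
    simp [h1]
    positivity
  · calc _ ≤ L * ∑ r ∈ range t, ∑ j : Fin n, |(n : ℝ)⁻¹ -
            (∑ k : Fin n, Psi M 1 t (Fin.castLE hnm k) i)⁻¹ * Psi M r t (Fin.castLE hnm j) i| :=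
          norm_smul_sum_sub_smul_sum_le _ _ _ _ hg
      _ ≤ L * ∑ r ∈ range t, ∑ _j : Fin n, (1 - c) ^ ((t - r) / (n * B + 1)) / (n * c) := by
          gcongr with r hr j
          exact abs_inv_sub_inv_sum_Psi_mul_le hn _ hc hM hblock ht (mem_range.1 hr) i j
      _ = L / c * ∑ r ∈ range t, (1 - c) ^ ((t - r) / (n * B + 1)) := by
          simp only [sum_const, card_univ, Fintype.card_fin, nsmul_eq_mul, mul_sum]
          refine sum_congr rfl fun r _ => ?_
          field_simp
      _ ≤ L / c * (1 / ((1 - (1 - c) ^ ((1 : ℝ) / (n * B + 1))) *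
            (1 - c) ^ ((n * B : ℝ) / (n * B + 1)))) := by
          gcongr
          exact_mod_cast sum_range_pow_div_le hγ (by linarith) (n * B) t
      _ = _ := by rw [div_mul_div_comm, mul_one, ← mul_assoc]

/-- Uniform consensus-error bound for the RPSDA gradient aggregation (Lemma 5):
for `t ≥ nB+1`, `‖zbar[t] - z_i[t]/w_i[t]‖ ≤ L / (β^(nB+1) (1 - γ^(1/(nB+1))) γ^(nB/(nB+1)))`
with `γ = 1 - β^(nB+1)`. -/
theorem rpsda_consensus_error {m n B dd : ℕ} (hn : 0 < n) (hnm : n ≤ m)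
    (β L : ℝ) (hβ0 : 0 < β) (hβ1 : β ≤ 1) (hL : 0 ≤ L)
    (M : ℕ → Matrix (Fin m) (Fin m) ℝ) (hM : ∀ τ, RowStochastic (M τ))
    (hblock : ∀ r : ℕ, ∀ i j : Fin m, β ^ (n * B + 1) ≤ Psi M r (r + n * B) i j)
    (g : ℕ → Fin n → EuclideanSpace ℝ (Fin dd))
    (hg : ∀ r j, ‖g r j‖ ≤ L) :
    ∀ t : ℕ, n * B + 1 ≤ t → ∀ i : Fin m,
      ‖(n : ℝ)⁻¹ • (∑ r ∈ Finset.range t, ∑ j : Fin n, g r j)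
          - (∑ j : Fin n, Psi M 1 t (Fin.castLE hnm j) i)⁻¹ •
              (∑ r ∈ Finset.range t, ∑ j : Fin n, Psi M r t (Fin.castLE hnm j) i • g r j)‖
        ≤ L / (β ^ (n * B + 1)
            * (1 - (1 - β ^ (n * B + 1)) ^ ((1 : ℝ) / (n * B + 1)))
            * (1 - β ^ (n * B + 1)) ^ ((n * B : ℝ) / (n * B + 1))) :=
  rpsda_consensus_error_general hn hnm β L hβ0 hL M hM hblock g hg
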